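/- arXiv:math/0412456 — 5 statements merged into one kernel-verified Lean document; each statement's English description precedes it below -/
import Mathlib

section
/- For the hyperoctahedral group B_n, the flag-major index generating function satisfies sum over beta in B_n of q^{fmaj(beta)} = prod_{j=1}^n (1-q^{2j})/(1-q) = prod_{j=1}^n (1 + q + q^2 + ... + q^{2j-1}). -/
open scoped Classical

/-- The hyperoctahedral group `B_n`, modeled as pairs (permutation, sign vector),
i.e. the wreath product `ℤ₂ ≀ S_n`.  `β.2 i = true` means the entry at position `i`
is negative. -/
abbrev HO (n : ℕ) := Equiv.Perm (Fin n) × (Fin n → Bool)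

namespace HO

/-- The inverse signed permutation. -/
noncomputable def inv {n : ℕ} (β : HO n) : HO n := (β.1⁻¹, fun i => β.2 (β.1⁻¹ i))

/-- One-line notation (1-indexed): the signed value `β(i) ∈ {±1,…,±n}` for `1 ≤ i ≤ n`,
and `0` outside this range. -/
noncomputable def val {n : ℕ} (β : HO n) (i : ℕ) : ℤ :=
  if h : 1 ≤ i ∧ i ≤ n then
    (if β.2 ⟨i - 1, by omega⟩ then -(((β.1 ⟨i - 1, by omega⟩ : Fin n) : ℕ) + 1 : ℤ)
     else (((β.1 ⟨i - 1, by omega⟩ : Fin n) : ℕ) + 1 : ℤ))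
  else 0

/-- The order `-1 ≺ -2 ≺ ⋯ ≺ -n ≺ ⋯ ≺ 0 ≺ 1 ≺ 2 ≺ ⋯` on `ℤ`:
`bprec a b` means `a ≺ b`. -/
noncomputable def bprec (a b : ℤ) : Prop :=
  (a < 0 ∧ b < 0 ∧ -a < -b) ∨ (a < 0 ∧ 0 ≤ b) ∨ (0 ≤ a ∧ 0 ≤ b ∧ a < b)

/-- Descent set of `β` with respect to the order `≺`. -/
noncomputable def Des {n : ℕ} (β : HO n) : Finset ℕ :=
  (Finset.Icc 1 (n - 1)).filter fun i => bprec (val β (i + 1)) (val β i)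

/-- Rise set of `β` with respect to the order `≺`. -/
noncomputable def Ris {n : ℕ} (β : HO n) : Finset ℕ :=
  (Finset.Icc 1 (n - 1)).filter fun i => bprec (val β i) (val β (i + 1))

/-- Major index. -/
noncomputable def maj {n : ℕ} (β : HO n) : ℕ := ∑ i ∈ Des β, i

/-- Number of negative entries. -/
noncomputable def neg {n : ℕ} (β : HO n) : ℕ :=
  ((Finset.Icc 1 n).filter fun i => val β i < 0).card

/-- The flag-major index `fmaj β = 2 maj β + neg β`. -/
noncomputable def fmaj {n : ℕ} (β : HO n) : ℕ := 2 * maj β + neg β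

/-- `δ_i(β) = #{j ∈ Des(β) : j < i}`. -/
noncomputable def deltaStat {n : ℕ} (β : HO n) (i : ℕ) : ℕ := ((Des β).filter fun j => j < i).card

/-- `d_i(β) = #{j ∈ Des(β) : j ≥ i}`. -/
noncomputable def dStat {n : ℕ} (β : HO n) (i : ℕ) : ℕ := ((Des β).filter fun j => i ≤ j).card

/-- `ε_i(β) = 1` if `β(i) < 0`, else `0`. -/
noncomputable def epsStat {n : ℕ} (β : HO n) (i : ℕ) : ℕ := if val β i < 0 then 1 else 0

/-- `η_i(β) = 1` if `β(i) > 0`, else `0`. -/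
noncomputable def etaStat {n : ℕ} (β : HO n) (i : ℕ) : ℕ := if 0 < val β i then 1 else 0

/-- `g_i(β) = 2 δ_i(β) + η_i(β)`. -/
noncomputable def gstat {n : ℕ} (β : HO n) (i : ℕ) : ℕ := 2 * deltaStat β i + etaStat β i

/-- `f_i(β) = 2 d_i(β) + ε_i(β)` (so that `fmaj β = ∑ f_i(β)`). -/
noncomputable def fStat {n : ℕ} (β : HO n) (i : ℕ) : ℕ := 2 * dStat β i + epsStat β i

/-- `μ_i(β) = #{k ∈ Ris(β⁻¹) : k < i}`. -/
noncomputable def muStat {n : ℕ} (β : HO n) (i : ℕ) : ℕ := ((Ris (inv β)).filter fun k => k < i).card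

/-- `ĝ_i(β) = 2 μ_{σ(i)}(β) + ε_i(β)`, where `σ(i) = |β(i)|`. -/
noncomputable def ghat {n : ℕ} (β : HO n) (i : ℕ) : ℕ :=
  2 * muStat β (val β i).natAbs + epsStat β i

end HO

/-!
Encode a signed permutation by replacing each entry `-a` of its one-line notation by `a` and each
entry `a` by `a + n`. This turns the order `≺` into the usual order of `ℤ`, so `maj β` is the
major index of a word with distinct letters. Once the signs of the values `1, …, n` are fixed, the
encoded words run through all rearrangements of one set of `n` integers, and MacMahon's theorem
gives `∑ q ^ maj = [n]_q!` over them. Hence the sum equals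
`(1 + q) ^ n * [n]_{q²}! = ∏ j, (1 + q) [j]_{q²} = ∏ j, [2j]_q`.
MacMahon's theorem follows by inserting the largest letter into the `m + 1` gaps of a word of
length `m`: the major index goes up by each of `0, …, m` exactly once.
-/

open Finset

/-- If `E = insert m D` for the descent set `D` of a word of length `m`, inserting a new largest
letter at gap `g` raises the major index by `insertionShift E g`. The gaps in `E` get the labels
`0, 1, …` from right to left and the other gaps the remaining labels from left to right. -/
def insertionShift (E : Finset ℕ) (g : ℕ) : ℕ := #{j ∈ E | g < j} + if g ∈ E then 0 else g

lemma card_filter_lt_eq_add (E : Finset ℕ) {g g' : ℕ} (h : g ≤ g') :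
    #{j ∈ E | g < j} = #{j ∈ E | g' < j} + #{j ∈ E | g < j ∧ j ≤ g'} := by
  rw [← card_union_of_disjoint (disjoint_filter.2 fun _ _ _ _ => by omega), ← filter_or]
  exact congrArg card (filter_congr fun j _ => by omega)

lemma insertionShift_injective (E : Finset ℕ) : Function.Injective (insertionShift E) := by
  intro g g' h
  by_contra hne
  wlog hlt : g < g' generalizing g g'
  · exact this h.symm (Ne.symm hne) (by omega)
  have hsplit := card_filter_lt_eq_add E hlt.le
  unfold insertionShift at h
  by_cases hg' : g' ∈ E
  · have : 1 ≤ #{j ∈ E | g < j ∧ j ≤ g'} :=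
      card_pos.2 ⟨g', mem_filter.2 ⟨hg', hlt, le_rfl⟩⟩
    split_ifs at h <;> omega
  · have : #{j ∈ E | g < j ∧ j ≤ g'} ≤ #(Ioo g g') :=
      card_le_card fun j hj => by
        simp only [mem_filter, mem_Ioo] at hj ⊢
        exact ⟨hj.2.1, lt_of_le_of_ne hj.2.2 fun e => hg' (e ▸ hj.1)⟩
    rw [Nat.card_Ioo] at this
    split_ifs at h <;> omega

lemma insertionShift_mem_range {E : Finset ℕ} {m g : ℕ} (hE : E ⊆ range (m + 1))
    (hg : g ∈ range (m + 1)) : insertionShift E g ∈ range (m + 1) := by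
  have : #{j ∈ E | g < j} ≤ #(Ioc g m) :=
    card_le_card fun j hj => by
      simp only [mem_filter, mem_Ioc] at hj ⊢
      exact ⟨hj.2, Nat.lt_succ_iff.1 (mem_range.1 (hE hj.1))⟩
  rw [Nat.card_Ioc] at this
  rw [mem_range] at hg ⊢
  unfold insertionShift
  split_ifs <;> omega

lemma sum_pow_insertionShift {R : Type*} [CommSemiring R] (q : R) {E : Finset ℕ} {m : ℕ}
    (hE : E ⊆ range (m + 1)) :
    ∑ g ∈ range (m + 1), q ^ insertionShift E g = ∑ k ∈ range (m + 1), q ^ k := by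
  have himage : (range (m + 1)).image (insertionShift E) = range (m + 1) :=
    eq_of_subset_of_card_le
      (fun k hk => by
        obtain ⟨g, hg, rfl⟩ := mem_image.1 hk
        exact insertionShift_mem_range hE hg)
      (card_image_of_injective _ (insertionShift_injective E)).ge
  rw [← sum_image (insertionShift_injective E).injOn, himage]

namespace List
variable {α : Type*}

lemma sum_map_permutations'Aux {M : Type*} [AddCommMonoid M] (f : List α → M) (x : α)
    (l : List α) :
    ((permutations'Aux x l).map f).sum
      = ∑ g ∈ Finset.range (l.length + 1), f (l.insertIdx g x) := by
  have hofFn : permutations'Aux x l = ofFn fun g : Fin (l.length + 1) => l.insertIdx g x :=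
    ext_getElem (by simp [length_permutations'Aux]) fun g _ _ => by
      rw [getElem_permutations'Aux, List.getElem_ofFn]
  rw [hofFn, map_ofFn, sum_ofFn]
  exact Fin.sum_univ_eq_sum_range (fun g => f (l.insertIdx g x)) _

variable [LinearOrder α]

/-- Positions are `1`-based as in `HO.Des`: `i` is a descent when the letter at index `i` is
smaller than the one at index `i - 1` (`0`-based). -/
noncomputable def descents (l : List α) : Finset ℕ :=
  {i ∈ Icc 1 (l.length - 1) | l[i]? < l[i - 1]?}

noncomputable def majorIndex (l : List α) : ℕ := ∑ i ∈ l.descents, i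

lemma descents_subset_Ioo (l : List α) : l.descents ⊆ Ioo 0 l.length := by
  intro i hi
  simp only [descents, Finset.mem_filter, mem_Icc] at hi
  simp only [mem_Ioo]; omega

lemma mem_descents_insertIdx {l : List α} {x : α} (hx : ∀ y ∈ l, y < x) {g : ℕ}
    (hg : g ≤ l.length) {i : ℕ} :
    i ∈ (l.insertIdx g x).descents ↔ i < g ∧ i ∈ l.descents ∨
      i = g + 1 ∧ g < l.length ∨ g + 1 < i ∧ i - 1 ∈ l.descents := by
  have lt_some_x : ∀ j : ℕ, l[j]? < some x := fun j => by
    cases h : l[j]? with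
    | none => simp
    | some y => simpa using hx y (mem_of_getElem? h)
  have not_some_x_lt : ∀ j : ℕ, ¬ some x < l[j]? := fun j => by
    cases h : l[j]? with
    | none => simp
    | some y => simpa using (hx y (mem_of_getElem? h)).le
  simp only [descents, Finset.mem_filter, mem_Icc, length_insertIdx_of_le_length hg,
    getElem?_insertIdx]
  obtain h | rfl | rfl | h : i < g ∨ i = g ∨ i = g + 1 ∨ g + 1 < i := by omega
  · simp only [if_pos h, if_pos (show i - 1 < g by omega)]
    constructor
    · intro h'; exact Or.inl ⟨h, by omega, h'.2⟩
    · rintro (h' | h' | h') <;> first | exact ⟨by omega, h'.2.2⟩ | omega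
  · simp only [lt_self_iff_false, if_false, if_true, if_pos hg]
    constructor
    · rintro ⟨⟨hi, -⟩, h⟩
      rw [if_pos (by omega)] at h
      exact absurd h (not_some_x_lt _)
    · rintro (⟨⟨⟩, -⟩ | ⟨h, -⟩ | ⟨h, -⟩) <;> omega
  · simp [hg, lt_some_x]
  · simp only [if_neg (show ¬ i < g by omega), if_neg (show ¬ i = g by omega),
      if_neg (show ¬ i - 1 < g by omega), if_neg (show ¬ i - 1 = g by omega)]
    constructor
    · intro h'; exact Or.inr (Or.inr ⟨h, by omega, h'.2⟩)
    · rintro (h' | h' | h') <;> first | exact ⟨by omega, h'.2.2⟩ | omega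

lemma descents_insertIdx {l : List α} {x : α} (hx : ∀ y ∈ l, y < x) {g : ℕ}
    (hg : g ≤ l.length) :
    (l.insertIdx g x).descents = {i ∈ l.descents | i < g} ∪
      {i ∈ l.descents | g < i}.map (addRightEmbedding 1) ∪
        ({g + 1} : Finset ℕ).filter (fun _ => g < l.length) := by
  ext i
  rw [mem_descents_insertIdx hx hg]
  simp only [Finset.mem_union, Finset.mem_filter, Finset.mem_map, addRightEmbedding_apply]
  constructor
  · rintro (⟨h, hi⟩ | h | ⟨h, hi⟩)
    · exact Or.inl (Or.inl ⟨hi, h⟩)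
    · exact Or.inr (by simpa using h)
    · exact Or.inl (Or.inr ⟨i - 1, ⟨hi, by omega⟩, by omega⟩)
  · rintro ((⟨hi, h⟩ | ⟨j, ⟨hj, h⟩, rfl⟩) | h)
    · exact Or.inl ⟨h, hi⟩
    · exact Or.inr (Or.inr ⟨by omega, hj⟩)
    · exact Or.inr (Or.inl (by simpa using h))

lemma majorIndex_insertIdx {l : List α} {x : α} (hx : ∀ y ∈ l, y < x) {g : ℕ}
    (hg : g ≤ l.length) :
    (l.insertIdx g x).majorIndex
      = l.majorIndex + insertionShift (insert l.length l.descents) g := by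
  have hD := l.descents_subset_Ioo
  have hlen : l.length ∉ l.descents := fun h => by simpa using hD h
  have hsplit : l.majorIndex = ∑ i ∈ l.descents with i < g, i
      + (if g ∈ l.descents then g else 0) + ∑ i ∈ l.descents with g < i, i := by
    rw [majorIndex, Finset.sum_filter, Finset.sum_filter,
      ← Finset.sum_ite_eq' l.descents g fun i => i, ← Finset.sum_add_distrib,
      ← Finset.sum_add_distrib]
    exact Finset.sum_congr rfl fun i _ => by split_ifs <;> omega
  rw [majorIndex, descents_insertIdx hx hg, Finset.sum_union, Finset.sum_union, Finset.sum_map,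
    hsplit, insertionShift]
  · simp only [addRightEmbedding_apply, Finset.sum_add_distrib, Finset.sum_const, smul_eq_mul,
      mul_one, Finset.filter_insert, Finset.mem_insert, Finset.sum_filter, Finset.sum_singleton]
    by_cases hgm : g < l.length
    · have : l.length ∉ {j ∈ l.descents | g < j} := fun h => hlen (Finset.mem_filter.1 h).1
      simp only [if_pos hgm, card_insert_of_notMem this, hgm.ne, false_or]
      split_ifs <;> omega
    · obtain rfl : g = l.length := by omega
      simp only [lt_irrefl, if_false, hlen, true_or, if_true]
      omega
  · simp only [Finset.disjoint_left, Finset.mem_filter, Finset.mem_map, addRightEmbedding_apply]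
    rintro _ ⟨-, h⟩ ⟨j, ⟨-, hj⟩, rfl⟩
    omega
  · simp only [Finset.disjoint_left, Finset.mem_union, Finset.mem_filter, Finset.mem_map,
      Finset.mem_singleton, addRightEmbedding_apply]
    rintro _ (⟨-, h⟩ | ⟨j, ⟨-, hj⟩, rfl⟩) ⟨h', -⟩ <;> omega

variable {R : Type*} [CommSemiring R]

lemma sum_pow_majorIndex_permutations'Aux (q : R) {l : List α} {x : α} (hx : ∀ y ∈ l, y < x) :
    ((permutations'Aux x l).map fun l' => q ^ l'.majorIndex).sum
      = q ^ l.majorIndex * ∑ k ∈ Finset.range (l.length + 1), q ^ k := by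
  have hE : insert l.length l.descents ⊆ Finset.range (l.length + 1) := by
    intro i hi
    rcases Finset.mem_insert.1 hi with rfl | hi
    · exact Finset.mem_range.2 (Nat.lt_succ_self _)
    · exact Finset.mem_range.2 (Nat.lt_succ_of_lt (mem_Ioo.1 (l.descents_subset_Ioo hi)).2)
  rw [sum_map_permutations'Aux, ← sum_pow_insertionShift q hE, Finset.mul_sum]
  exact Finset.sum_congr rfl fun g hg => by
    rw [majorIndex_insertIdx hx (Nat.lt_succ_iff.1 (Finset.mem_range.1 hg)), pow_add]

lemma sum_pow_majorIndex_permutations' (q : R) {s : List α} (hs : s.Pairwise (· > ·)) :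
    (s.permutations'.map fun l => q ^ l.majorIndex).sum
      = ∏ j ∈ Icc 1 s.length, ∑ k ∈ Finset.range j, q ^ k := by
  induction s with
  | nil => simp [majorIndex, descents]
  | cons x t ih =>
    obtain ⟨hx, ht⟩ := pairwise_cons.1 hs
    rw [permutations', map_flatMap, flatMap_def, sum_flatten, map_map, length_cons,
      prod_Icc_succ_top (by omega), ← ih ht, ← sum_map_mul_right]
    refine congrArg sum (map_congr_left fun t' ht' => ?_)
    have hp : t' ~ t := mem_permutations'.1 ht'
    rw [Function.comp_apply, sum_pow_majorIndex_permutations'Aux q fun y hy => hx y (hp.subset hy),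
      hp.length_eq]

theorem sum_perm_pow_majorIndex_ofFn (q : R) {n : ℕ} {v : Fin n → α}
    (hv : Function.Injective v) :
    ∑ σ : Equiv.Perm (Fin n), q ^ (ofFn (v ∘ σ)).majorIndex
      = ∏ j ∈ Icc 1 n, ∑ k ∈ Finset.range j, q ^ k := by
  set s := (Finset.univ.image v).sort (· ≥ ·)
  have hs : s.Pairwise (· > ·) := (Finset.sortedGT_sort _).pairwise
  have hperm : ofFn v ~ s := perm_of_nodup_nodup_toFinset_eq (nodup_ofFn.2 hv)
    (Finset.sort_nodup _ _) (by rw [Finset.sort_toFinset]; ext; simp)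
  have hlen : s.length = n := by simpa using hperm.length_eq.symm
  have hwords : Finset.univ.val.map (fun σ : Equiv.Perm (Fin n) => ofFn (v ∘ σ))
      = (s.permutations' : Multiset (List α)) := by
    have hnodup : (Finset.univ.val.map fun σ : Equiv.Perm (Fin n) => ofFn (v ∘ σ)).Nodup :=
      Finset.univ.nodup.map fun σ τ h => Equiv.ext fun i => hv (congrFun (ofFn_inj.1 h) i)
    refine Multiset.eq_of_le_of_card_le ((Multiset.le_iff_subset hnodup).2 fun l hl => ?_) ?_
    · obtain ⟨σ, -, rfl⟩ := Multiset.mem_map.1 hl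
      exact Multiset.mem_coe.2 (mem_permutations'.2 ((σ.ofFn_comp_perm v).trans hperm))
    · simp [← (permutations_perm_permutations' s).length_eq, length_permutations, hlen,
        Fintype.card_perm]
  have hmac := sum_pow_majorIndex_permutations' q hs
  rw [hlen] at hmac
  rw [← hmac, ← Multiset.sum_coe, ← Multiset.map_coe, ← hwords, Multiset.map_map]
  rfl

end List

lemma geom_sum_range_two_mul {R : Type*} [CommSemiring R] (a : R) (j : ℕ) :
    ∑ k ∈ range (2 * j), a ^ k = (1 + a) * ∑ k ∈ range j, (a ^ 2) ^ k := by
  induction j with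
  | zero => simp
  | succ j ih =>
    rw [mul_add_one, sum_range_succ, sum_range_succ, ih, sum_range_succ, mul_add, ← pow_mul]
    ring

namespace HO

/-- `orderRank n s a` is the position of `-(a + 1)` (if `s`) or of `a + 1` (otherwise) in
`-1 ≺ -2 ≺ ⋯ ≺ -n ≺ 1 ≺ ⋯ ≺ n`. -/
def orderRank (n : ℕ) (s : Bool) (a : ℕ) : ℤ := if s then a + 1 else a + 1 + n

lemma bprec_iff_orderRank_lt {n a b : ℕ} (ha : a < n) (hb : b < n) (s t : Bool) :
    bprec (if s then -((a : ℤ) + 1) else (a : ℤ) + 1)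
        (if t then -((b : ℤ) + 1) else (b : ℤ) + 1) ↔ orderRank n s a < orderRank n t b := by
  cases s <;> cases t <;> simp only [bprec, orderRank, Bool.false_eq_true, if_true, if_false] <;>
    omega

lemma orderRank_injective {n : ℕ} (t : Fin n → Bool) :
    Function.Injective fun j : Fin n => orderRank n (t j) j := by
  intro j j' h
  have := j.isLt
  have := j'.isLt
  simp only [orderRank] at h
  ext
  split_ifs at h <;> omega

def word {n : ℕ} (β : HO n) : List ℤ := List.ofFn fun i => orderRank n (β.2 i) (β.1 i)

lemma val_add_one {n : ℕ} (β : HO n) (i : Fin n) :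
    val β (i + 1) = if β.2 i then -((β.1 i : ℤ) + 1) else (β.1 i : ℤ) + 1 := by
  rw [val, dif_pos ⟨by omega, i.isLt⟩]
  simp

lemma Des_eq_descents_word {n : ℕ} (β : HO n) : Des β = (word β).descents := by
  rw [Des, List.descents, word, List.length_ofFn]
  refine filter_congr fun i hi => ?_
  obtain ⟨h1, h2⟩ := mem_Icc.1 hi
  have hi := val_add_one β ⟨i, by omega⟩
  have hi' := val_add_one β ⟨i - 1, by omega⟩
  simp only [Nat.sub_add_cancel h1] at hi hi'
  rw [hi, hi', List.getElem?_ofFn, List.getElem?_ofFn, dif_pos (by omega), dif_pos (by omega),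
    Option.some_lt_some]
  exact bprec_iff_orderRank_lt (β.1 _).isLt (β.1 _).isLt _ _

lemma neg_eq_sum {n : ℕ} (β : HO n) : neg β = ∑ i, if β.2 i then 1 else 0 := by
  rw [neg, card_filter, ← Ico_add_one_right_eq_Icc, sum_Ico_eq_sum_range,
    ← Fin.sum_univ_eq_sum_range (fun i => if val β (1 + i) < 0 then 1 else 0)]
  refine sum_congr rfl fun i _ => ?_
  rw [add_comm, val_add_one]
  split_ifs <;> omega

lemma fmaj_eq_two_mul_majorIndex_add {n : ℕ} (σ : Equiv.Perm (Fin n)) (t : Fin n → Bool) :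
    fmaj (σ, t ∘ σ)
      = 2 * (List.ofFn ((fun j => orderRank n (t j) j) ∘ σ)).majorIndex
        + ∑ i, if t i then 1 else 0 := by
  rw [fmaj, maj, Des_eq_descents_word, neg_eq_sum]
  exact congrArg _ (Equiv.sum_comp σ fun i => if t i then 1 else 0)

end HO

open Polynomial

/-- `∑_{β ∈ B_n} q^{fmaj β} = ∏_{j=1}^n (1 + q + ⋯ + q^{2j-1})`. -/
theorem fmaj_generating_function (n : ℕ) :
    ∑ β : HO n, (Polynomial.X : Polynomial ℚ) ^ HO.fmaj β
      = ∏ j ∈ Finset.Icc 1 n, ∑ k ∈ Finset.range (2 * j), (Polynomial.X : Polynomial ℚ) ^ k := by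
  calc ∑ β : HO n, (X : ℚ[X]) ^ HO.fmaj β
      = ∑ σ : Equiv.Perm (Fin n), ∑ t : Fin n → Bool, X ^ HO.fmaj (σ, t ∘ σ) := by
        rw [Fintype.sum_prod_type]
        exact sum_congr rfl fun σ _ =>
          (Equiv.sum_comp (σ.symm.arrowCongr (Equiv.refl Bool)) _).symm
    _ = ∑ t : Fin n → Bool, (∏ i, (X : ℚ[X]) ^ (if t i then 1 else 0)) *
          ∑ σ : Equiv.Perm (Fin n), ((X : ℚ[X]) ^ 2) ^
            (List.ofFn ((fun j => HO.orderRank n (t j) j) ∘ σ)).majorIndex := by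
        simp_rw [HO.fmaj_eq_two_mul_majorIndex_add, pow_add, pow_mul, prod_pow_eq_pow_sum, mul_sum]
        rw [sum_comm]
        exact sum_congr rfl fun _ _ => sum_congr rfl fun _ _ => mul_comm _ _
    _ = ∏ j ∈ Icc 1 n, (1 + X) * ∑ k ∈ range j, ((X : ℚ[X]) ^ 2) ^ k := by
        simp_rw [List.sum_perm_pow_majorIndex_ofFn _ (HO.orderRank_injective _)]
        rw [← sum_mul,
          ← Fintype.prod_sum fun _ (b : Bool) => (X : ℚ[X]) ^ (if b then 1 else 0),
          prod_mul_distrib, prod_const, prod_const, Nat.card_Icc]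
        simp [add_comm]
    _ = _ := by simp_rw [geom_sum_range_two_mul]
end

section
/- For a signed permutation beta in B_n, define g_i(beta) = 2*delta_i(beta) + eta_i(beta), where delta_i(beta) = #{j in Des(beta) : j < i} and eta_i(beta) = 1 if beta(i) > 0 and 0 otherwise. Then g_i(beta) <= g_{i+1}(beta) for all 1 <= i <= n-1. -/
open scoped Classical

/-- `g_i(β) ≤ g_{i+1}(β)` for `1 ≤ i ≤ n - 1`. -/
theorem gstat_monotone (n : ℕ) (β : HO n) (i : ℕ) (h1 : 1 ≤ i) (h2 : i ≤ n - 1) :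
    HO.gstat β i ≤ HO.gstat β (i + 1) := by
  have hn : i + 1 ≤ n := by omega
  have hδ : HO.deltaStat β i ≤ HO.deltaStat β (i + 1) := by
    apply Finset.card_le_card
    intro x hx
    simp only [Finset.mem_filter] at hx ⊢
    exact ⟨hx.1, by omega⟩
  by_cases hη : 0 < HO.val β i
  · by_cases hη2 : 0 < HO.val β (i + 1)
    · simp only [HO.gstat, HO.etaStat, hη, hη2, if_pos]
      omega
    · have hneg : HO.val β (i + 1) < 0 := by
        have hne : HO.val β (i + 1) ≠ 0 := by
          simp only [HO.val, dif_pos (show 1 ≤ i + 1 ∧ i + 1 ≤ n by omega)]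
          split <;> omega
        omega
      have hdes : i ∈ HO.Des β := by
        simp only [HO.Des, Finset.mem_filter, Finset.mem_Icc]
        refine ⟨⟨h1, h2⟩, Or.inr (Or.inl ⟨hneg, le_of_lt hη⟩)⟩
      have hkey : HO.deltaStat β i + 1 ≤ HO.deltaStat β (i + 1) := by
        have hsub : insert i ((HO.Des β).filter (fun j => j < i)) ⊆
            (HO.Des β).filter (fun j => j < i + 1) := by
          intro x hx
          simp only [Finset.mem_insert, Finset.mem_filter] at hx ⊢
          rcases hx with rfl | ⟨hx1, hx2⟩
          · exact ⟨hdes, by omega⟩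
          · exact ⟨hx1, by omega⟩
        have hcard := Finset.card_le_card hsub
        rw [Finset.card_insert_of_notMem (by simp)] at hcard
        simpa [HO.deltaStat] using hcard
      simp only [HO.gstat, HO.etaStat, hη, hη2, if_pos, if_neg, if_false]
      omega
  · simp only [HO.gstat, HO.etaStat, if_neg hη]
    have : (if 0 < HO.val β (i + 1) then 1 else 0) ≤ 1 := by split <;> omega
    omega
end

section
/- The monomial diagonal invariants M(a,b), indexed by even bipartite partitions (a,b) of length n (all parts (a_i,b_i) with a_i+b_i even, including zero parts, sorted lexicographically), form a linear basis of the ring R^{B_n} of diagonally B_n-invariant polynomials in Q[x_1,...,x_n,y_1,...,y_n]. -/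
open scoped Classical

/-- The diagonal action of `β ∈ B_n` on `ℚ[x_1,…,x_n,y_1,…,y_n]`
(`x_i = X (inl i)`, `y_i = X (inr i)`): `β · p(x,y) = p(β·x, β·y)`. -/
noncomputable def actD {n : ℕ} (β : HO n) :
    MvPolynomial (Fin n ⊕ Fin n) ℚ →ₐ[ℚ] MvPolynomial (Fin n ⊕ Fin n) ℚ :=
  MvPolynomial.aeval fun v =>
    match v with
    | Sum.inl i => (if β.2 i then -1 else 1) * MvPolynomial.X (Sum.inl (β.1 i))
    | Sum.inr i => (if β.2 i then -1 else 1) * MvPolynomial.X (Sum.inr (β.1 i))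

/-- The determinant of `β ∈ B_n` viewed as a linear transformation on `ℚ^n`. -/
noncomputable def detHO {n : ℕ} (β : HO n) : ℚ :=
  ((Equiv.Perm.sign β.1 : ℤ) : ℚ) * (-1) ^ (Finset.univ.filter fun i => β.2 i).card

/-- The space `R^{B_n}` of diagonally `B_n`-invariant polynomials. -/
noncomputable def invD (n : ℕ) : Submodule ℚ (MvPolynomial (Fin n ⊕ Fin n) ℚ) where
  carrier := {p | ∀ β : HO n, actD β p = p}
  add_mem' := by
    intro a b ha hb β
    simp only [map_add, ha β, hb β]
  zero_mem' := by intro β; simp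
  smul_mem' := by
    intro c a ha β
    simp only [map_smul, ha β]

/-- The space `R^±` of diagonally `B_n`-alternating polynomials. -/
noncomputable def altD (n : ℕ) : Submodule ℚ (MvPolynomial (Fin n ⊕ Fin n) ℚ) where
  carrier := {p | ∀ β : HO n, actD β p = MvPolynomial.C (detHO β) * p}
  add_mem' := by
    intro a b ha hb β
    simp only [map_add, ha β, hb β, mul_add]
  zero_mem' := by intro β; simp
  smul_mem' := by
    intro c a ha β
    simp only [map_smul, ha β, mul_smul_comm]

/-- The weight giving the bigrading of `ℚ[x,y]` by bidegree: `x`-variables have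
weight `(1,0)` and `y`-variables weight `(0,1)`. -/
noncomputable def biWeight (n : ℕ) : Fin n ⊕ Fin n → ℕ × ℕ :=
  fun v => match v with
    | Sum.inl _ => (1, 0)
    | Sum.inr _ => (0, 1)

/-- Even bipartite partitions of length `n`: sequences of `n` cells `(a_i, b_i)` with
`a_i + b_i` even, listed in weakly increasing lexicographic order (empty parts
`(0,0)` allowed). -/
noncomputable def EvenBipartite (n : ℕ) : Type :=
  {p : Fin n → ℕ × ℕ // (Monotone fun i => toLex (p i)) ∧
    ∀ i, ((p i).1 + (p i).2) % 2 = 0}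

/-- The monomial diagonal invariant `M(a,b)`: the sum of the distinct monomials
`σ · (x^a y^b)` over permutations `σ ∈ S_n` of the variable pairs. -/
noncomputable def Mmon {n : ℕ} (p : Fin n → ℕ × ℕ) : MvPolynomial (Fin n ⊕ Fin n) ℚ :=
  ∑ m ∈ Finset.image
      (fun σ : Equiv.Perm (Fin n) =>
        Finsupp.equivFunOnFinite.symm fun v : Fin n ⊕ Fin n =>
          match v with
          | Sum.inl i => (p (σ⁻¹ i)).1
          | Sum.inr i => (p (σ⁻¹ i)).2)
      Finset.univ,
    MvPolynomial.monomial m (1 : ℚ)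

/-!
An element `β ∈ B_n` sends the monomial `x^a y^b` to `±` its image under the underlying
permutation, the sign being `∏ (-1)^(a_i + b_i)` over the coordinates `i` that `β` negates.
Hence an invariant polynomial has coefficients constant on `S_n`-orbits of exponents and
vanishing at every exponent with some `a_i + b_i` odd (negate coordinate `i` alone), while
`M(a, b)` is invariant when all `a_i + b_i` are even. The orbit of an exponent is determined by
its `shape`, the lexicographic sorting of its pairs `(a_i, b_i)`, and `M(a, b)` is the indicator
of the orbit of shape `(a, b)`. So an invariant `f` is the sum of `coeff (a, b) f • M(a, b)` over
the shapes of its support, and the `M(a, b)` are independent because `M(a, b)` has coefficient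
`1` at `x^a y^b` and `0` at every other sorted exponent.
-/

namespace Tuple

variable {n : ℕ} {α : Type*} [LinearOrder α]

lemma comp_sort_eq_iff_exists_perm {f g : Fin n → α} (hg : Monotone g) :
    f ∘ sort f = g ↔ ∃ σ : Equiv.Perm (Fin n), f = g ∘ σ := by
  constructor
  · rintro rfl
    exact ⟨(sort f)⁻¹, by ext i; simp⟩
  · rintro ⟨σ, rfl⟩
    have hsorted : Monotone (g ∘ ⇑(σ * sort (g ∘ σ))) := monotone_sort (g ∘ σ)
    simpa [Function.comp_assoc] using unique_monotone hsorted (τ := 1) hg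

end Tuple

open MvPolynomial Finset

noncomputable section

variable {n : ℕ}

def pairEquiv : ((Fin n ⊕ Fin n) →₀ ℕ) ≃ (Fin n → ℕ × ℕ) where
  toFun m i := (m (.inl i), m (.inr i))
  invFun p := Finsupp.equivFunOnFinite.symm (Sum.elim (fun i => (p i).1) (fun i => (p i).2))
  left_inv m := by ext (i | i) <;> rfl
  right_inv p := rfl

@[simp]
lemma pairEquiv_apply (m : (Fin n ⊕ Fin n) →₀ ℕ) (i : Fin n) :
    pairEquiv m i = (m (.inl i), m (.inr i)) := rfl

def permExp (σ : Equiv.Perm (Fin n)) : Equiv.Perm ((Fin n ⊕ Fin n) →₀ ℕ) :=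
  pairEquiv.trans <| (σ.arrowCongr (Equiv.refl (ℕ × ℕ))).trans pairEquiv.symm

@[simp]
lemma pairEquiv_permExp (σ : Equiv.Perm (Fin n)) (m : (Fin n ⊕ Fin n) →₀ ℕ) :
    pairEquiv (permExp σ m) = pairEquiv m ∘ ⇑σ⁻¹ :=
  rfl

@[simp]
lemma permExp_apply_inl (σ : Equiv.Perm (Fin n)) (m : (Fin n ⊕ Fin n) →₀ ℕ) (i : Fin n) :
    permExp σ m (.inl i) = m (.inl (σ⁻¹ i)) := rfl

@[simp]
lemma permExp_apply_inr (σ : Equiv.Perm (Fin n)) (m : (Fin n ⊕ Fin n) →₀ ℕ) (i : Fin n) :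
    permExp σ m (.inr i) = m (.inr (σ⁻¹ i)) := rfl

@[simp]
lemma permExp_one (m : (Fin n ⊕ Fin n) →₀ ℕ) : permExp 1 m = m :=
  pairEquiv.injective (by simp)

def orbitExp (p : Fin n → ℕ × ℕ) : Finset ((Fin n ⊕ Fin n) →₀ ℕ) :=
  univ.image fun σ : Equiv.Perm (Fin n) => pairEquiv.symm (p ∘ ⇑σ⁻¹)

lemma Mmon_eq_sum_orbitExp (p : Fin n → ℕ × ℕ) :
    Mmon p = ∑ m ∈ orbitExp p, monomial m 1 := by
  unfold Mmon orbitExp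
  congr 2
  ext σ v
  cases v <;> rfl

lemma mem_orbitExp {p : Fin n → ℕ × ℕ} {m : (Fin n ⊕ Fin n) →₀ ℕ} :
    m ∈ orbitExp p ↔ ∃ σ : Equiv.Perm (Fin n), pairEquiv m = p ∘ σ := by
  simp only [orbitExp, mem_image, mem_univ, true_and, Equiv.symm_apply_eq]
  exact ⟨fun ⟨σ, h⟩ => ⟨σ⁻¹, h.symm⟩, fun ⟨σ, h⟩ => ⟨σ⁻¹, by simpa using h.symm⟩⟩

lemma permExp_mem_orbitExp_iff {σ : Equiv.Perm (Fin n)} {p : Fin n → ℕ × ℕ}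
    {m : (Fin n ⊕ Fin n) →₀ ℕ} : permExp σ m ∈ orbitExp p ↔ m ∈ orbitExp p := by
  simp only [mem_orbitExp, pairEquiv_permExp]
  constructor
  · rintro ⟨τ, h⟩
    exact ⟨τ * σ, by rw [Equiv.Perm.coe_mul, ← Function.comp_assoc, ← h]; funext i; simp⟩
  · rintro ⟨τ, h⟩
    exact ⟨τ * σ⁻¹, by rw [h]; rfl⟩

def shape (m : (Fin n ⊕ Fin n) →₀ ℕ) : Fin n → ℕ × ℕ :=
  pairEquiv m ∘ Tuple.sort (toLex ∘ pairEquiv m)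

lemma shape_monotone (m : (Fin n ⊕ Fin n) →₀ ℕ) : Monotone fun i => toLex (shape m i) :=
  Tuple.monotone_sort (toLex ∘ pairEquiv m)

lemma shape_eq_iff_mem_orbitExp {p : Fin n → ℕ × ℕ} (hp : Monotone fun i => toLex (p i))
    {m : (Fin n ⊕ Fin n) →₀ ℕ} : shape m = p ↔ m ∈ orbitExp p := by
  have toLex_comp_inj := (toLex (α := ℕ × ℕ)).injective.comp_left (α := Fin n)
  rw [mem_orbitExp, ← toLex_comp_inj.eq_iff]
  simp_rw [← toLex_comp_inj.eq_iff (a := pairEquiv m)]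
  exact Tuple.comp_sort_eq_iff_exists_perm (f := toLex ∘ pairEquiv m) hp

lemma shape_pairEquiv_symm {p : Fin n → ℕ × ℕ} (hp : Monotone fun i => toLex (p i)) :
    shape (pairEquiv.symm p) = p :=
  (shape_eq_iff_mem_orbitExp hp).2 <| mem_orbitExp.2 ⟨1, by simp⟩

lemma pairEquiv_symm_shape (m : (Fin n ⊕ Fin n) →₀ ℕ) :
    pairEquiv.symm (shape m) = permExp (Tuple.sort (toLex ∘ pairEquiv m))⁻¹ m := by
  rw [Equiv.symm_apply_eq, pairEquiv_permExp, inv_inv]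
  rfl

lemma coeff_Mmon {p : Fin n → ℕ × ℕ} (hp : Monotone fun i => toLex (p i))
    (m : (Fin n ⊕ Fin n) →₀ ℕ) : coeff m (Mmon p) = if shape m = p then 1 else 0 := by
  simp [Mmon_eq_sum_orbitExp, coeff_sum, coeff_monomial, shape_eq_iff_mem_orbitExp hp]

def flipSign (β : HO n) (m : (Fin n ⊕ Fin n) →₀ ℕ) : ℚ :=
  ∏ i, (if β.2 i then -1 else 1) ^ (m (.inl i) + m (.inr i))

lemma actD_monomial (β : HO n) (m : (Fin n ⊕ Fin n) →₀ ℕ) (c : ℚ) :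
    actD β (monomial m c) = flipSign β m • monomial (permExp β.1 m) c := by
  have hsign (i : Fin n) : (if β.2 i then -1 else 1 : MvPolynomial (Fin n ⊕ Fin n) ℚ) =
      C (if β.2 i then -1 else 1) := by
    split_ifs <;> simp
  rw [actD, aeval_monomial, monomial_eq, Finsupp.prod_fintype _ _ (fun _ => pow_zero _),
    Finsupp.prod_fintype _ _ (fun _ => pow_zero _)]
  simp only [Fintype.prod_sum_type]
  rw [← Equiv.prod_comp β.1 fun i =>
      (X (.inl i) : MvPolynomial (Fin n ⊕ Fin n) ℚ) ^ permExp β.1 m (.inl i),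
    ← Equiv.prod_comp β.1 fun i =>
      (X (.inr i) : MvPolynomial (Fin n ⊕ Fin n) ℚ) ^ permExp β.1 m (.inr i)]
  simp only [hsign, mul_pow, prod_mul_distrib, permExp_apply_inl, permExp_apply_inr,
    Equiv.Perm.coe_inv, Equiv.symm_apply_apply, flipSign, smul_eq_C_mul, pow_add, map_mul,
    map_prod, map_pow, algebraMap_eq]
  ring

lemma coeff_permExp_actD (β : HO n) (f : MvPolynomial (Fin n ⊕ Fin n) ℚ)
    (m : (Fin n ⊕ Fin n) →₀ ℕ) : coeff (permExp β.1 m) (actD β f) = flipSign β m * coeff m f := by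
  induction f using MvPolynomial.induction_on' with
  | monomial u c =>
    simp only [actD_monomial, coeff_smul, coeff_monomial, (permExp β.1).injective.eq_iff]
    split_ifs with h <;> simp [h]
  | add p q hp hq => rw [map_add, coeff_add, coeff_add, hp, hq, mul_add]

lemma coeff_permExp_of_mem_invD {f : MvPolynomial (Fin n ⊕ Fin n) ℚ} (hf : f ∈ invD n)
    (σ : Equiv.Perm (Fin n)) (m : (Fin n ⊕ Fin n) →₀ ℕ) : coeff (permExp σ m) f = coeff m f := by
  simpa [flipSign, hf (σ, fun _ => false)] using coeff_permExp_actD (σ, fun _ => false) f m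

lemma even_of_mem_support_of_mem_invD {f : MvPolynomial (Fin n ⊕ Fin n) ℚ} (hf : f ∈ invD n)
    {m : (Fin n ⊕ Fin n) →₀ ℕ} (hm : m ∈ f.support) (i : Fin n) :
    Even (m (.inl i) + m (.inr i)) := by
  by_contra hodd
  have hsign : flipSign (1, fun j => decide (j = i)) m = -1 := by
    simp [flipSign, Finset.prod_ite_eq', Nat.not_even_iff_odd.1 hodd]
  have := coeff_permExp_actD (1, fun j => decide (j = i)) f m
  rw [hf, hsign, permExp_one] at this
  exact mem_support_iff.1 hm (by linarith)

lemma flipSign_eq_one {m : (Fin n ⊕ Fin n) →₀ ℕ} (hm : ∀ i, Even (m (.inl i) + m (.inr i)))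
    (β : HO n) : flipSign β m = 1 :=
  prod_eq_one fun i _ => by split_ifs <;> simp [(hm i).neg_one_pow]

lemma Mmon_mem_invD {p : Fin n → ℕ × ℕ} (hp : ∀ i, Even ((p i).1 + (p i).2)) :
    Mmon p ∈ invD n := by
  intro β
  have hsign (m) (hm : m ∈ orbitExp p) : flipSign β m = 1 := by
    obtain ⟨σ, hσ⟩ := mem_orbitExp.1 hm
    refine flipSign_eq_one (fun i => ?_) β
    have hpair := congr_fun hσ i
    simp only [pairEquiv_apply, Function.comp_apply, Prod.ext_iff] at hpair
    rw [hpair.1, hpair.2]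
    exact hp (σ i)
  rw [Mmon_eq_sum_orbitExp]
  calc actD β (∑ m ∈ orbitExp p, monomial m 1)
      _ = ∑ m ∈ orbitExp p, monomial (permExp β.1 m) 1 := by
        rw [map_sum]
        exact sum_congr rfl fun m hm => by rw [actD_monomial, hsign m hm, one_smul]
      _ = ∑ m ∈ orbitExp p, monomial m 1 :=
        sum_equiv (permExp β.1) (fun _ => permExp_mem_orbitExp_iff.symm) (fun _ _ => rfl)

lemma coeff_pairEquiv_symm_shape {f : MvPolynomial (Fin n ⊕ Fin n) ℚ} (hf : f ∈ invD n)
    (m : (Fin n ⊕ Fin n) →₀ ℕ) : coeff (pairEquiv.symm (shape m)) f = coeff m f := by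
  rw [pairEquiv_symm_shape, coeff_permExp_of_mem_invD hf]

lemma eq_sum_Mmon_shape {f : MvPolynomial (Fin n ⊕ Fin n) ℚ} (hf : f ∈ invD n) :
    f = ∑ q ∈ f.support.image shape, coeff (pairEquiv.symm q) f • Mmon q := by
  ext m
  rw [coeff_sum]
  calc coeff m f
      _ = ∑ q ∈ f.support.image shape, if shape m = q then coeff (pairEquiv.symm q) f else 0 := by
        rw [sum_ite_eq, coeff_pairEquiv_symm_shape hf]
        split_ifs with h
        · rfl
        · exact notMem_support_iff.1 fun hm => h (mem_image_of_mem shape hm)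
      _ = _ := sum_congr rfl fun q hq => by
        obtain ⟨m', -, rfl⟩ := mem_image.1 hq
        rw [coeff_smul, coeff_Mmon (shape_monotone m'), smul_eq_mul, mul_ite, mul_one, mul_zero]

lemma mem_span_Mmon_of_mem_invD {f : MvPolynomial (Fin n ⊕ Fin n) ℚ} (hf : f ∈ invD n) :
    f ∈ Submodule.span ℚ (Set.range fun p : EvenBipartite n => Mmon p.1) := by
  rw [eq_sum_Mmon_shape hf]
  refine Submodule.sum_mem _ fun q hq => Submodule.smul_mem _ _ (Submodule.subset_span ?_)
  obtain ⟨m, hm, rfl⟩ := mem_image.1 hq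
  refine ⟨⟨shape m, shape_monotone m, fun i => Nat.even_iff.1 ?_⟩, rfl⟩
  exact even_of_mem_support_of_mem_invD hf hm _

lemma linearIndependent_Mmon : LinearIndependent ℚ fun p : EvenBipartite n => Mmon p.1 := by
  let coeffs : MvPolynomial (Fin n ⊕ Fin n) ℚ →ₗ[ℚ] EvenBipartite n → ℚ :=
    LinearMap.pi fun p => lcoeff ℚ (pairEquiv.symm p.1)
  refine .of_comp coeffs ?_
  convert Pi.linearIndependent_single_one (EvenBipartite n) ℚ with q
  funext p
  simp only [coeffs, Function.comp_apply, LinearMap.pi_apply, lcoeff_apply, coeff_Mmon q.2.1,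
    shape_pairEquiv_symm p.2.1, Pi.single_apply]
  exact if_congr Subtype.val_injective.eq_iff rfl rfl

end

/-- the monomial diagonal invariants `M(a,b)`, indexed by even bipartite
partitions of length `n`, form a linear basis of the space of diagonally
`B_n`-invariant polynomials. -/
theorem monomial_invariants_basis (n : ℕ) :
    LinearIndependent ℚ (fun p : EvenBipartite n => Mmon p.1) ∧
    Submodule.span ℚ (Set.range fun p : EvenBipartite n => Mmon p.1) = invD n := by
  refine ⟨linearIndependent_Mmon, le_antisymm ?_ fun f hf => mem_span_Mmon_of_mem_invD hf⟩
  rw [Submodule.span_le]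
  rintro _ ⟨p, rfl⟩
  exact Mmon_mem_invD fun i => Nat.even_iff.2 (p.2.2 i)
end

section
/- For every signed permutation beta in B_n, the classifying signed permutation of the compact e-diagram D_beta = (g(beta), g~(beta)) is beta itself; i.e., beta(D_beta) = beta. -/
open scoped Classical

/-- The key used for the labelling (opposite-lexicographic) order on the cells of a
diagram `D : Fin n → ℕ × ℕ`: compare `b`, then `a`, then the index (to break ties). -/
noncomputable def okey {n : ℕ} (D : Fin n → ℕ × ℕ) (i : Fin n) : ℕ ×ₗ (ℕ ×ₗ ℕ) :=
  toLex ((D i).2, toLex ((D i).1, (i : ℕ)))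

/-- The label of the `i`-th cell of `D` (cells listed in reading = lex order):
its rank in the opposite-lexicographic labelling order. -/
noncomputable def labelOf {n : ℕ} (D : Fin n → ℕ × ℕ) (i : Fin n) : ℕ :=
  (Finset.univ.filter fun j : Fin n => okey D j ≤ okey D i).card

/-- The value at `i` of the classifying signed permutation `β(D)` of a diagram `D`
whose cells are listed in lex (reading) order: `β(D)(i) = (-1)^{a_i + 1} · label(i)`. -/
noncomputable def classifyVal {n : ℕ} (D : Fin n → ℕ × ℕ) (i : Fin n) : ℤ :=
  (if (D i).1 % 2 = 1 then 1 else -1) * (labelOf D i : ℤ)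

/-- The compact `e`-diagram `D_β = (g(β), g̃(β))`, with cells listed in reading order:
the `i`-th cell is `(g_i(β), g_{σ(i)}(β⁻¹))` where `σ(i) = |β(i)|`. -/
noncomputable def Dbeta {n : ℕ} (β : HO n) (i : Fin n) : ℕ × ℕ :=
  (HO.gstat β ((i : ℕ) + 1), HO.gstat (HO.inv β) (HO.val β ((i : ℕ) + 1)).natAbs)

/-!
Write `σ = |β|`. The cell of `D_β` in row `i` has second coordinate `g̃_i = g_{σ(i)}(β⁻¹)`.
Since `g(γ)` is weakly increasing along positions, and along a run of equal `g`-values `γ` has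
neither descents nor sign changes (so its absolute values increase), the labelling order
`(g̃_i, g_i, i)` sorts the cells exactly by `σ(i)`. Hence the label of row `i` is `σ(i)`, and the
sign `(-1)^{g_i + 1}` is the sign of `β(i)` because `g_i ≡ [β(i) > 0] (mod 2)`.
-/

namespace HO

variable {n : ℕ}

theorem val_succ (γ : HO n) (i : Fin n) :
    val γ ((i : ℕ) + 1) = if γ.2 i then -((γ.1 i : ℕ) + 1 : ℤ) else ((γ.1 i : ℕ) + 1 : ℤ) := by
  simp [val]

theorem natAbs_val_succ (γ : HO n) (i : Fin n) : (val γ ((i : ℕ) + 1)).natAbs = γ.1 i + 1 := by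
  rw [val_succ]; split <;> omega

theorem exists_fin_succ_eq {k : ℕ} (h1 : 1 ≤ k) (h2 : k ≤ n) : ∃ i : Fin n, k = (i : ℕ) + 1 :=
  ⟨⟨k - 1, by omega⟩, by simp; omega⟩

theorem val_ne_zero (γ : HO n) {k : ℕ} (h1 : 1 ≤ k) (h2 : k ≤ n) : val γ k ≠ 0 := by
  obtain ⟨i, rfl⟩ := exists_fin_succ_eq h1 h2
  rw [val_succ]; split <;> omega

theorem natAbs_val_injOn (γ : HO n) :
    Set.InjOn (fun k => (val γ k).natAbs) (Set.Icc 1 n) := by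
  rintro k ⟨hk1, hk2⟩ l ⟨hl1, hl2⟩ h
  obtain ⟨i, rfl⟩ := exists_fin_succ_eq hk1 hk2
  obtain ⟨j, rfl⟩ := exists_fin_succ_eq hl1 hl2
  simp only [natAbs_val_succ, Nat.add_right_cancel_iff, Fin.val_inj] at h
  rw [γ.1.injective h]

theorem natAbs_val_inv (β : HO n) (i : Fin n) :
    (val (inv β) (β.1 i + 1)).natAbs = i + 1 := by
  simp [natAbs_val_succ, inv]

theorem mem_Des_of_bprec {γ : HO n} {t : ℕ} (h1 : 1 ≤ t) (h2 : t + 1 ≤ n)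
    (h : bprec (val γ (t + 1)) (val γ t)) : t ∈ Des γ :=
  Finset.mem_filter.mpr ⟨Finset.mem_Icc.mpr ⟨h1, by omega⟩, h⟩

theorem etaStat_le_one (γ : HO n) (k : ℕ) : etaStat γ k ≤ 1 := by
  unfold etaStat; split <;> omega

theorem deltaStat_succ (γ : HO n) (t : ℕ) :
    deltaStat γ (t + 1) = deltaStat γ t + if t ∈ Des γ then 1 else 0 := by
  have hsplit : (Des γ).filter (· < t + 1) = (Des γ).filter (· < t) ∪ (Des γ).filter (· = t) := by
    ext j; simp only [Finset.mem_filter, Finset.mem_union, ← and_or_left, Nat.lt_succ_iff_lt_or_eq]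
  have hdisj : Disjoint ((Des γ).filter (· < t)) ((Des γ).filter (· = t)) :=
    Finset.disjoint_filter.mpr fun _ _ hlt heq => by omega
  unfold deltaStat
  rw [hsplit, Finset.card_union_of_disjoint hdisj, Finset.filter_eq']
  split <;> simp

/-- A descent raises `δ` by one, which outweighs `η`; without a descent the sign cannot drop
from `+` to `-`, since every negative entry precedes every positive one under `≺`. -/
theorem gstat_le_gstat_succ (γ : HO n) {t : ℕ} (h1 : 1 ≤ t) (h2 : t + 1 ≤ n) :
    gstat γ t ≤ gstat γ (t + 1) := by
  have hη := etaStat_le_one γ t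
  unfold gstat
  rw [deltaStat_succ]
  by_cases hd : t ∈ Des γ
  · simp only [hd, if_true]; omega
  · have hη' : etaStat γ t ≤ etaStat γ (t + 1) := by
      have hne := val_ne_zero γ (k := t + 1) (by omega) h2
      have : ¬ bprec (val γ (t + 1)) (val γ t) := fun hb => hd (mem_Des_of_bprec h1 h2 hb)
      unfold etaStat bprec at *
      split_ifs <;> omega
    simp only [hd, if_false]; omega

theorem gstat_monotoneOn (γ : HO n) : MonotoneOn (gstat γ) (Set.Icc 1 n) := by
  rintro s ⟨hs1, -⟩ u ⟨-, hun⟩ hsu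
  induction u, hsu using Nat.le_induction with
  | base => rfl
  | succ k hsk ih => exact (ih (by omega)).trans (gstat_le_gstat_succ γ (by omega) hun)

theorem natAbs_val_lt_succ_of_gstat_eq (γ : HO n) {t : ℕ} (h1 : 1 ≤ t) (h2 : t + 1 ≤ n)
    (h : gstat γ t = gstat γ (t + 1)) : (val γ t).natAbs < (val γ (t + 1)).natAbs := by
  have hη := etaStat_le_one γ t
  have hη' := etaStat_le_one γ (t + 1)
  have hd : t ∉ Des γ := fun hd => by
    unfold gstat at h; rw [deltaStat_succ, if_pos hd] at h; omega
  have hnd : ¬ bprec (val γ (t + 1)) (val γ t) := fun hb => hd (mem_Des_of_bprec h1 h2 hb)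
  have hsame : etaStat γ t = etaStat γ (t + 1) := by
    unfold gstat at h; rw [deltaStat_succ, if_neg hd] at h; omega
  have hne : (val γ t).natAbs ≠ (val γ (t + 1)).natAbs := fun he => by
    have := natAbs_val_injOn γ ⟨h1, by omega⟩ ⟨by omega, h2⟩ he
    omega
  have h0 := val_ne_zero γ h1 (by omega)
  have h0' := val_ne_zero γ (k := t + 1) (by omega) h2
  unfold etaStat at hsame
  unfold bprec at hnd
  split_ifs at hsame <;> omega

theorem natAbs_val_lt_of_gstat_eq (γ : HO n) {s u : ℕ} (hs : 1 ≤ s) (hsu : s < u) (hu : u ≤ n)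
    (h : gstat γ s = gstat γ u) : (val γ s).natAbs < (val γ u).natAbs := by
  have hconst : ∀ k ∈ Set.Icc s u, gstat γ k = gstat γ s := fun k ⟨hsk, hku⟩ =>
    le_antisymm (h ▸ gstat_monotoneOn γ ⟨by omega, by omega⟩ ⟨by omega, hu⟩ hku)
      (gstat_monotoneOn γ ⟨hs, by omega⟩ ⟨by omega, by omega⟩ hsk)
  induction u, hsu using Nat.le_induction with
  | base =>
    exact natAbs_val_lt_succ_of_gstat_eq γ hs hu (hconst (s + 1) ⟨by omega, le_rfl⟩).symm
  | succ k hsk ih =>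
    refine (ih (by omega) ?_ fun m hm => hconst m ⟨hm.1, hm.2.trans k.le_succ⟩).trans ?_
    · exact (hconst k ⟨by omega, by omega⟩).symm
    · refine natAbs_val_lt_succ_of_gstat_eq γ (by omega) hu ?_
      rw [hconst k ⟨by omega, by omega⟩, hconst (k + 1) ⟨by omega, le_rfl⟩]

theorem gstat_mod_two_eq_one_iff (γ : HO n) (i : Fin n) :
    gstat γ ((i : ℕ) + 1) % 2 = 1 ↔ γ.2 i = false := by
  have : etaStat γ ((i : ℕ) + 1) = if γ.2 i then 0 else 1 := by
    rw [etaStat, val_succ]; split_ifs <;> omega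
  rw [gstat, this]
  split_ifs <;> simp_all

end HO

section

open HO

variable {n : ℕ}

/-- Ties in the second coordinate `g̃` force `i < j` by `natAbs_val_lt_of_gstat_eq` applied to
`β⁻¹`; then `g` is monotone and the index breaks the remaining tie. -/
theorem okey_Dbeta_lt_of_lt (β : HO n) {i j : Fin n} (h : β.1 i < β.1 j) :
    okey (Dbeta β) i < okey (Dbeta β) j := by
  have hle : gstat (inv β) (β.1 i + 1) ≤ gstat (inv β) (β.1 j + 1) :=
    gstat_monotoneOn (inv β) ⟨by omega, by omega⟩ ⟨by omega, by omega⟩ (by omega)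
  simp only [okey, Dbeta, natAbs_val_succ, Prod.Lex.toLex_lt_toLex]
  refine hle.lt_or_eq.imp id fun heq => ⟨heq, ?_⟩
  have hij : (i : ℕ) < j := by
    have := natAbs_val_lt_of_gstat_eq (inv β) (by omega) (by omega) (by omega) heq
    rwa [natAbs_val_inv, natAbs_val_inv, Nat.add_lt_add_iff_right] at this
  have hg : gstat β ((i : ℕ) + 1) ≤ gstat β ((j : ℕ) + 1) :=
    gstat_monotoneOn β ⟨by omega, by omega⟩ ⟨by omega, by omega⟩ (by omega)
  exact hg.lt_or_eq.imp id fun hgeq => ⟨hgeq, hij⟩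

theorem okey_Dbeta_le_iff (β : HO n) (i j : Fin n) :
    okey (Dbeta β) j ≤ okey (Dbeta β) i ↔ β.1 j ≤ β.1 i := by
  have hmono : StrictMono (okey (Dbeta β) ∘ β.1.symm) := fun a b hab =>
    okey_Dbeta_lt_of_lt β (by simpa using hab)
  simpa using hmono.le_iff_le (a := β.1 j) (b := β.1 i)

theorem labelOf_Dbeta (β : HO n) (i : Fin n) : labelOf (Dbeta β) i = β.1 i + 1 := by
  have hcount : (Finset.univ.filter fun j => β.1 j ≤ β.1 i).card
      = (Finset.univ.filter fun k => k ≤ β.1 i).card := by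
    rw [← Finset.card_map β.1.toEmbedding, Finset.map_filter, Finset.map_univ_equiv]
    simp
  simp only [labelOf, okey_Dbeta_le_iff, hcount, Finset.filter_ge_eq_Iic, Fin.card_Iic]

end

/-- the classifying signed permutation of the compact `e`-diagram `D_β`
is `β` itself: `β(D_β) = β`. -/
theorem classify_Dbeta (n : ℕ) (β : HO n) :
    ∀ i : Fin n, classifyVal (Dbeta β) i = HO.val β ((i : ℕ) + 1) := by
  intro i
  have hparity := HO.gstat_mod_two_eq_one_iff β i
  rw [classifyVal, labelOf_Dbeta, HO.val_succ]
  cases hsign : β.2 i <;> simp_all [Dbeta]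
end

section
/- For each n-element subset D = {(a_1,b_1),...,(a_n,b_n)} of N x N with all a_i + b_i odd, the determinant Delta_D(x,y) = det( x_i^{a_j} y_i^{b_j} )_{1 <= i,j <= n} is a diagonally B_n-alternating polynomial; and the collection of all such Delta_D, over all n-element subsets of the odd chessboard, is a linear basis of the space R^{+-} of diagonally B_n-alternating polynomials in Q[x,y]. -/
open scoped Classical

/-- `o`-diagrams: `n`-element subsets of the odd chessboard
`{(a,b) : a + b odd}`, listed in strictly increasing lexicographic order. -/
noncomputable def ODiag (n : ℕ) : Type :=
  {D : Fin n → ℕ × ℕ // (StrictMono fun i => toLex (D i)) ∧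
    ∀ i, ((D i).1 + (D i).2) % 2 = 1}

/-- The determinant `Δ_D(x,y) = det(x_i^{a_j} y_i^{b_j})` associated to a diagram `D`. -/
noncomputable def DeltaD {n : ℕ} (D : Fin n → ℕ × ℕ) : MvPolynomial (Fin n ⊕ Fin n) ℚ :=
  Matrix.det fun i j : Fin n =>
    MvPolynomial.X (Sum.inl i) ^ (D j).1 * MvPolynomial.X (Sum.inr i) ^ (D j).2

/-!
Identify the monomial `∏ x_i ^ a_i * y_i ^ b_i` with its exponent vector `g : Fin n → ℕ × ℕ`.
For an alternating `p`, the permutations in `B_n` give `coeff (g ∘ σ) p = sign σ * coeff g p`,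
and flipping the sign of `x_i, y_i` kills `coeff g p` unless `a_i + b_i` is odd. So `coeff g p ≠ 0`
forces `g` to be injective with odd entries, i.e. `g = D ∘ σ` for a unique o-diagram `D`, and `p` is
determined by its coefficients at the o-diagrams. Expanding the determinant, `Δ_D` has coefficient
`1` at `D` and `0` at every other o-diagram, so the `Δ_D` and these coefficient functionals are dual
bases of `R^±`. That `Δ_D` is alternating is the matrix identity `β · M_D = diag(±1) · P_β · M_D`,
where the signs come out right because every `a_j + b_j` is odd.
-/

open MvPolynomial

section

variable {n : ℕ}

/-- Exponent vectors of monomials in `x, y`: `g i = (a, b)` stands for `x_i ^ a * y_i ^ b`. -/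
noncomputable def biExp (n : ℕ) : (Fin n → ℕ × ℕ) ≃ ((Fin n ⊕ Fin n) →₀ ℕ) where
  toFun g := Finsupp.equivFunOnFinite.symm (Sum.elim (fun i => (g i).1) (fun i => (g i).2))
  invFun m i := (m (Sum.inl i), m (Sum.inr i))
  left_inv _ := rfl
  right_inv m := by ext (_ | _) <;> rfl

lemma prod_X_pow_eq_monomial (g : Fin n → ℕ × ℕ) :
    ∏ i, (X (Sum.inl i) ^ (g i).1 * X (Sum.inr i) ^ (g i).2 : MvPolynomial (Fin n ⊕ Fin n) ℚ) =
      monomial (biExp n g) 1 := by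
  rw [monomial_eq, C_1, one_mul, Finsupp.prod_fintype _ _ (fun _ => pow_zero _),
    Fintype.prod_sum_type, ← Finset.prod_mul_distrib]
  rfl

def HO.sgn (β : HO n) (i : Fin n) : ℚ := if β.2 i then -1 else 1

lemma HO.sgn_pow_of_odd (β : HO n) (i : Fin n) {k : ℕ} (hk : k % 2 = 1) :
    β.sgn i ^ k = β.sgn i := by
  have hodd : Odd k := Nat.odd_iff.mpr hk
  unfold HO.sgn
  split <;> simp [hodd.neg_one_pow]

lemma actD_X_inl (β : HO n) (i : Fin n) :
    actD β (X (Sum.inl i)) = C (β.sgn i) * X (Sum.inl (β.1 i)) := by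
  simp only [actD, aeval_X, HO.sgn]
  split <;> simp

lemma actD_X_inr (β : HO n) (i : Fin n) :
    actD β (X (Sum.inr i)) = C (β.sgn i) * X (Sum.inr (β.1 i)) := by
  simp only [actD, aeval_X, HO.sgn]
  split <;> simp

lemma detHO_eq_sign_mul_prod_sgn (β : HO n) : detHO β = Equiv.Perm.sign β.1 * ∏ i, β.sgn i := by
  simp [detHO, HO.sgn, Finset.prod_ite]

lemma actD_X_pow_mul_X_pow (β : HO n) (i : Fin n) (a b : ℕ) :
    actD β (X (Sum.inl i) ^ a * X (Sum.inr i) ^ b) =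
      C (β.sgn i ^ (a + b)) * (X (Sum.inl (β.1 i)) ^ a * X (Sum.inr (β.1 i)) ^ b) := by
  simp only [map_mul, map_pow, actD_X_inl, actD_X_inr, pow_add]
  ring

lemma actD_monomial_s16 (β : HO n) (g : Fin n → ℕ × ℕ) (c : ℚ) :
    actD β (monomial (biExp n g) c) =
      C (∏ i, β.sgn i ^ ((g i).1 + (g i).2)) * monomial (biExp n (g ∘ β.1.symm)) c := by
  rw [← mul_one c, ← smul_eq_mul, ← smul_monomial, ← smul_monomial, ← prod_X_pow_eq_monomial,
    ← prod_X_pow_eq_monomial, map_smul, map_prod,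
    Finset.prod_congr rfl fun i _ => actD_X_pow_mul_X_pow β i _ _, Finset.prod_mul_distrib,
    map_prod, ← Equiv.prod_comp β.1 (fun j => X (Sum.inl j) ^ _ * _)]
  simp only [Function.comp_apply, Equiv.symm_apply_apply]
  rw [smul_eq_C_mul, smul_eq_C_mul]
  ring

lemma coeff_actD (β : HO n) (g : Fin n → ℕ × ℕ) (p : MvPolynomial (Fin n ⊕ Fin n) ℚ) :
    coeff (biExp n g) (actD β p) =
      (∏ i, β.sgn i ^ ((g (β.1 i)).1 + (g (β.1 i)).2)) * coeff (biExp n (g ∘ β.1)) p := by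
  induction p using MvPolynomial.induction_on' with
  | monomial m c =>
    obtain ⟨h, rfl⟩ := (biExp n).surjective m
    simp only [actD_monomial_s16, coeff_C_mul, coeff_monomial, (biExp n).injective.eq_iff,
      Equiv.comp_symm_eq]
    by_cases hh : h = g ∘ β.1
    · subst hh; rfl
    · simp [hh]
  | add p q hp hq => simp only [map_add, coeff_add, hp, hq, mul_add]

section Alternating

variable {p : MvPolynomial (Fin n ⊕ Fin n) ℚ}

lemma coeff_comp_perm_of_mem_altD (hp : p ∈ altD n) (g : Fin n → ℕ × ℕ)
    (σ : Equiv.Perm (Fin n)) :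
    coeff (biExp n (g ∘ σ)) p = Equiv.Perm.sign σ * coeff (biExp n g) p := by
  have h := congrArg (coeff (biExp n g)) (hp (σ, fun _ => false))
  rw [coeff_actD, coeff_C_mul] at h
  simpa [detHO_eq_sign_mul_prod_sgn, HO.sgn] using h

lemma injective_of_coeff_ne_zero (hp : p ∈ altD n) {g : Fin n → ℕ × ℕ}
    (hg : coeff (biExp n g) p ≠ 0) : Function.Injective g := by
  intro i j hij
  by_contra hne
  have hswap : g ∘ Equiv.swap i j = g := by
    ext1 k
    rcases eq_or_ne k i with rfl | hki
    · simp [hij]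
    rcases eq_or_ne k j with rfl | hkj
    · simp [hij]
    · simp [Equiv.swap_apply_of_ne_of_ne hki hkj]
  have h := coeff_comp_perm_of_mem_altD hp g (Equiv.swap i j)
  rw [hswap, Equiv.Perm.sign_swap hne] at h
  push_cast at h
  exact hg (by linarith)

lemma odd_of_coeff_ne_zero (hp : p ∈ altD n) {g : Fin n → ℕ × ℕ}
    (hg : coeff (biExp n g) p ≠ 0) (i : Fin n) : ((g i).1 + (g i).2) % 2 = 1 := by
  have h := congrArg (coeff (biExp n g)) (hp (1, fun j => decide (j = i)))
  have hprod : ∏ j, (HO.sgn (1, fun j => decide (j = i)) j : ℚ) ^ ((g j).1 + (g j).2) =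
      (-1) ^ ((g i).1 + (g i).2) :=
    (Finset.prod_eq_single i (fun j _ hj => by simp [HO.sgn, hj]) (by simp)).trans
      (by simp [HO.sgn])
  have hdet : detHO ((1, fun j => decide (j = i)) : HO n) = -1 := by
    simp [detHO, Finset.filter_eq']
  simp only [coeff_actD, coeff_C_mul, hdet, Equiv.Perm.coe_one, Function.comp_id, id] at h
  rw [hprod] at h
  rcases Nat.even_or_odd ((g i).1 + (g i).2) with heven | hodd
  · rw [heven.neg_one_pow] at h
    exact absurd (by linarith) hg
  · exact Nat.odd_iff.mp hodd

end Alternating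

lemma DeltaD_eq_det_of (f : Fin n → ℕ × ℕ) :
    DeltaD f = (Matrix.of fun i j => X (Sum.inl i) ^ (f j).1 * X (Sum.inr i) ^ (f j).2).det :=
  rfl

lemma DeltaD_eq_sum (f : Fin n → ℕ × ℕ) :
    DeltaD f = ∑ σ : Equiv.Perm (Fin n), monomial (biExp n (f ∘ σ)) (Equiv.Perm.sign σ : ℚ) := by
  rw [DeltaD_eq_det_of, ← Matrix.det_transpose, Matrix.det_apply]
  refine Finset.sum_congr rfl fun σ _ => ?_
  have hprod := prod_X_pow_eq_monomial (f ∘ σ)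
  simp only [Function.comp_apply] at hprod
  simp only [Matrix.transpose_apply, Matrix.of_apply, hprod, Units.smul_def, smul_monomial]
  simp

lemma DeltaD_mem_altD {f : Fin n → ℕ × ℕ} (hf : ∀ i, ((f i).1 + (f i).2) % 2 = 1) :
    DeltaD f ∈ altD n := by
  intro β
  set M : Matrix (Fin n) (Fin n) (MvPolynomial (Fin n ⊕ Fin n) ℚ) :=
    Matrix.of fun i j => X (Sum.inl i) ^ (f j).1 * X (Sum.inr i) ^ (f j).2
  have hM : (actD β).mapMatrix M = Matrix.of fun i j => C (β.sgn i) * M.submatrix β.1 id i j := by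
    refine Matrix.ext fun i j => ?_
    simp only [AlgHom.mapMatrix_apply, Matrix.map_apply, Matrix.of_apply, Matrix.submatrix_apply,
      id, M, actD_X_pow_mul_X_pow, HO.sgn_pow_of_odd β i (hf j)]
  rw [DeltaD_eq_det_of, AlgHom.map_det, hM, Matrix.det_mul_column, Matrix.det_permute,
    detHO_eq_sign_mul_prod_sgn, map_mul, map_prod]
  simp only [map_intCast]
  ring

namespace ODiag

lemma injective (D : ODiag n) : Function.Injective D.1 :=
  fun _ _ h => D.2.1.injective (congrArg toLex h)

lemma comp_perm_eq_iff {D D' : ODiag n} {σ : Equiv.Perm (Fin n)} :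
    D'.1 ∘ σ = D.1 ↔ D' = D ∧ σ = 1 := by
  refine ⟨fun h => ?_, by rintro ⟨rfl, rfl⟩; rfl⟩
  have hmono : Monotone ((fun i => toLex (D'.1 i)) ∘ σ) := by
    have hD := D.2.1.monotone
    rw [← h] at hD
    exact hD
  have hself : D'.1 ∘ σ = D'.1 :=
    funext fun i => toLex.injective (congrFun (Tuple.unique_monotone hmono
      (σ := σ) (τ := 1) D'.2.1.monotone) i)
  exact ⟨Subtype.ext (hself.symm.trans h),
    Equiv.ext fun i => D'.injective (congrFun hself i)⟩

lemma exists_comp_perm {g : Fin n → ℕ × ℕ} (hg : Function.Injective g)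
    (hodd : ∀ i, ((g i).1 + (g i).2) % 2 = 1) :
    ∃ (D : ODiag n) (σ : Equiv.Perm (Fin n)), D.1 ∘ σ = g := by
  set τ := Tuple.sort fun i => toLex (g i)
  refine ⟨⟨g ∘ τ, (Tuple.monotone_sort _).strictMono_of_injective ?_, fun i => hodd (τ i)⟩,
    τ⁻¹, ?_⟩
  · exact toLex.injective.comp (hg.comp τ.injective)
  · ext1 i; simp

end ODiag

lemma coeff_DeltaD (f g : Fin n → ℕ × ℕ) :
    coeff (biExp n g) (DeltaD f) =
      ∑ σ : Equiv.Perm (Fin n), if f ∘ σ = g then (Equiv.Perm.sign σ : ℚ) else 0 := by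
  simp only [DeltaD_eq_sum, coeff_sum, coeff_monomial, (biExp n).injective.eq_iff]

lemma coeff_DeltaD_ODiag (D D' : ODiag n) :
    coeff (biExp n D.1) (DeltaD D'.1) = if D' = D then 1 else 0 := by
  simp [coeff_DeltaD, ODiag.comp_perm_eq_iff, ite_and]

lemma eq_zero_of_mem_altD_of_coeff_ODiag {p : MvPolynomial (Fin n ⊕ Fin n) ℚ} (hp : p ∈ altD n)
    (h : ∀ D : ODiag n, coeff (biExp n D.1) p = 0) : p = 0 := by
  ext m
  obtain ⟨g, rfl⟩ := (biExp n).surjective m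
  by_contra hg
  obtain ⟨D, σ, rfl⟩ := ODiag.exists_comp_perm (injective_of_coeff_ne_zero hp hg)
    (odd_of_coeff_ne_zero hp hg)
  rw [coeff_comp_perm_of_mem_altD hp, h D, mul_zero, coeff_zero] at hg
  exact hg rfl

lemma dualBases_DeltaD_coeff :
    Module.DualBases (fun D : ODiag n => (⟨DeltaD D.1, DeltaD_mem_altD D.2.2⟩ : altD n))
      (fun D => (lcoeff ℚ (biExp n D.1)).comp (altD n).subtype) where
  eval_same D := by simp [coeff_DeltaD_ODiag]
  eval_of_ne D D' hne := by simp [coeff_DeltaD_ODiag, Ne.symm hne]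
  total {p q} h := Subtype.ext <| sub_eq_zero.mp <|
    eq_zero_of_mem_altD_of_coeff_ODiag (sub_mem p.2 q.2) fun D => by simpa [sub_eq_zero] using h D
  finite p := by
    refine (p.1.support.finite_toSet.preimage
      (f := fun D : ODiag n => biExp n D.1) ?_).subset fun D hD => ?_
    · exact ((biExp n).injective.comp Subtype.val_injective).injOn
    · simpa using hD

end

/-- each `Δ_D` with `D` an `n`-element subset of the odd chessboard is
diagonally `B_n`-alternating, and together they form a linear basis of the space
`R^±` of diagonally `B_n`-alternating polynomials. -/
theorem DeltaD_basis_of_alternants (n : ℕ) :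
    (∀ D : ODiag n, DeltaD D.1 ∈ altD n) ∧
    LinearIndependent ℚ (fun D : ODiag n => DeltaD D.1) ∧
    Submodule.span ℚ (Set.range fun D : ODiag n => DeltaD D.1) = altD n := by
  have hbasis := dualBases_DeltaD_coeff (n := n)
  have hrange : (Set.range fun D : ODiag n => DeltaD D.1) =
      (altD n).subtype '' Set.range hbasis.basis := by
    rw [hbasis.coe_basis, ← Set.range_comp]
    rfl
  refine ⟨fun D => DeltaD_mem_altD D.2.2, ?_, ?_⟩
  · have h := hbasis.basis.linearIndependent.map' _ (altD n).ker_subtype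
    rwa [hbasis.coe_basis] at h
  · rw [hrange, Submodule.span_image, hbasis.basis.span_eq, Submodule.map_subtype_top]
end
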